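/- arXiv:2512.02160 — 3 statements merged into one kernel-verified Lean document; each statement's English description precedes it below -/
import Mathlib

section
/- The expected squared error of the ensemble mean against the truth satisfies E[(X̄ − Y)²] = σ_e²/n + σ_y² + c − 2γ + (μ_x − μ_y)², where σ_e² = σ_x² − c. -/
open MeasureTheory

/-- Covariance of two real random variables. -/
noncomputable def cov {Ω : Type*} [MeasurableSpace Ω] (μ : Measure Ω) (f g : Ω → ℝ) : ℝ :=
  ∫ ω, (f ω - ∫ x, f x ∂μ) * (g ω - ∫ x, g x ∂μ) ∂μ

/-- Ensemble mean. -/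
noncomputable def ensMean {Ω : Type*} {n : ℕ} (X : Fin n → Ω → ℝ) (ω : Ω) : ℝ :=
  (∑ i, X i ω) / n

/-- Unbiased ensemble variance. -/
noncomputable def ensVar {Ω : Type*} {n : ℕ} (X : Fin n → Ω → ℝ) (ω : Ω) : ℝ :=
  (∑ i, (X i ω - ensMean X ω) ^ 2) / ((n : ℝ) - 1)

/-- The Spread-Error statistic `δ_τ = ((n+1)/n) S_e² − (X̄ − Y)²`. -/
noncomputable def spreadError {Ω : Type*} {n : ℕ} (X : Fin n → Ω → ℝ) (Y : Ω → ℝ) (ω : Ω) : ℝ :=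
  (((n : ℝ) + 1) / n) * ensVar X ω - (ensMean X ω - Y ω) ^ 2

lemma my_integrable_mul {Ω : Type*} [MeasurableSpace Ω] {μ : Measure Ω} {f g : Ω → ℝ}
    (hf : MemLp f 2 μ) (hg : MemLp g 2 μ) :
    Integrable (fun ω => f ω * g ω) μ := by
  have h1 : Integrable (fun ω => (f ω + g ω) ^ 2) μ := (hf.add hg).integrable_sq
  have h2 := hf.integrable_sq
  have h3 := hg.integrable_sq
  have h12 : Integrable (fun ω => (f ω + g ω) ^ 2 - f ω ^ 2) μ := h1.sub h2
  have h123 : Integrable (fun ω => (f ω + g ω) ^ 2 - f ω ^ 2 - g ω ^ 2) μ := h12.sub h3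
  have h := h123.const_mul (1/2 : ℝ)
  refine h.congr (Filter.Eventually.of_forall fun ω => ?_)
  ring

lemma integral_mul_of_memℒp {Ω : Type*} [MeasurableSpace Ω] {μ : Measure Ω}
    [IsProbabilityMeasure μ] {f g : Ω → ℝ} (hf : MemLp f 2 μ) (hg : MemLp g 2 μ) :
    ∫ ω, f ω * g ω ∂μ = cov μ f g + (∫ ω, f ω ∂μ) * (∫ ω, g ω ∂μ) := by
  have hif : Integrable f μ := hf.integrable one_le_two
  have hig : Integrable g μ := hg.integrable one_le_two
  have hmul : Integrable (fun ω => f ω * g ω) μ := my_integrable_mul hf hg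
  set a := ∫ ω, f ω ∂μ with ha
  set b := ∫ ω, g ω ∂μ with hb
  have h1 : Integrable (fun ω => f ω * g ω - a * g ω) μ := hmul.sub (hig.const_mul a)
  have h2 : Integrable (fun ω => f ω * g ω - a * g ω - b * f ω) μ := h1.sub (hif.const_mul b)
  have hcov : cov μ f g = ∫ ω, (f ω * g ω - a * g ω - b * f ω + a * b) ∂μ := by
    unfold cov
    congr 1 with ω
    ring
  rw [hcov, integral_add h2 (integrable_const _), integral_sub h1 (hif.const_mul b),
    integral_sub hmul (hig.const_mul a), integral_const_mul _ _, integral_const_mul _ _,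
    integral_const]
  simp [← ha, ← hb]
  ring

/-- `E[(X̄ − Y)²] = σ_e²/n + σ_y² + c − 2γ + (μ_x − μ_y)²`, where `σ_e² = σ_x² − c`. -/
theorem expected_mse_of_ensemble_mean
    {Ω : Type*} [MeasurableSpace Ω] (μ : Measure Ω) [IsProbabilityMeasure μ]
    (n : ℕ) (hn : 2 ≤ n) (X : Fin n → Ω → ℝ) (Y : Ω → ℝ)
    (hL2 : ∀ i, MemLp (X i) 2 μ) (hYL2 : MemLp Y 2 μ)
    (μx σx2 c μy σy2 γ : ℝ) (hσx2 : 0 < σx2) (hσy2 : 0 < σy2)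
    (hmean : ∀ i, ∫ ω, X i ω ∂μ = μx)
    (hvar : ∀ i, cov μ (X i) (X i) = σx2)
    (hcov : ∀ i j, i ≠ j → cov μ (X i) (X j) = c)
    (hmeanY : ∫ ω, Y ω ∂μ = μy)
    (hvarY : cov μ Y Y = σy2)
    (hcovXY : ∀ i, cov μ (X i) Y = γ) :
    ∫ ω, (ensMean X ω - Y ω) ^ 2 ∂μ =
      (σx2 - c) / n + σy2 + c - 2 * γ + (μx - μy) ^ 2 := by
  have hn0 : (n : ℝ) ≠ 0 := by positivity
  have hXX : ∀ i j : Fin n, ∫ ω, X i ω * X j ω ∂μ =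
      (if i = j then σx2 else c) + μx * μx := by
    intro i j
    rw [integral_mul_of_memℒp (hL2 i) (hL2 j), hmean, hmean]
    by_cases h : i = j
    · subst h; simp [hvar i]
    · simp [h, hcov i j h]
  have hXY : ∀ i : Fin n, ∫ ω, X i ω * Y ω ∂μ = γ + μx * μy := by
    intro i
    rw [integral_mul_of_memℒp (hL2 i) hYL2, hmean, hmeanY, hcovXY]
  have hYY : ∫ ω, Y ω * Y ω ∂μ = σy2 + μy * μy := by
    rw [integral_mul_of_memℒp hYL2 hYL2, hmeanY, hvarY]
  have hpt : ∀ ω, (ensMean X ω - Y ω) ^ 2 =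
      (∑ i, ∑ j, X i ω * X j ω) / (n : ℝ) ^ 2
        - (2 / (n : ℝ)) * ∑ i, X i ω * Y ω + Y ω * Y ω := by
    intro ω
    have hsq : (∑ i, X i ω) * (∑ j, X j ω) = ∑ i, ∑ j, X i ω * X j ω :=
      Finset.sum_mul_sum _ _ _ _
    have hsy : (∑ i, X i ω) * Y ω = ∑ i, X i ω * Y ω := Finset.sum_mul _ _ _
    unfold ensMean
    rw [← hsq, ← hsy]
    field_simp
    ring
  have hintXX : ∀ i j : Fin n, Integrable (fun ω => X i ω * X j ω) μ :=
    fun i j => my_integrable_mul (hL2 i) (hL2 j)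
  have hintXY : ∀ i : Fin n, Integrable (fun ω => X i ω * Y ω) μ :=
    fun i => my_integrable_mul (hL2 i) hYL2
  have hintYY : Integrable (fun ω => Y ω * Y ω) μ := my_integrable_mul hYL2 hYL2
  have hintSS : Integrable (fun ω => ∑ i, ∑ j, X i ω * X j ω) μ :=
    integrable_finset_sum _ fun i _ => integrable_finset_sum _ fun j _ => hintXX i j
  have hintSY : Integrable (fun ω => ∑ i, X i ω * Y ω) μ :=
    integrable_finset_sum _ fun i _ => hintXY i
  have hA : Integrable (fun ω => (∑ i, ∑ j, X i ω * X j ω) / (n : ℝ) ^ 2) μ :=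
    hintSS.div_const _
  have hB : Integrable (fun ω => (2 / (n : ℝ)) * ∑ i, X i ω * Y ω) μ :=
    hintSY.const_mul _
  have hAB : Integrable (fun ω => (∑ i, ∑ j, X i ω * X j ω) / (n : ℝ) ^ 2
      - (2 / (n : ℝ)) * ∑ i, X i ω * Y ω) μ := hA.sub hB
  have hinner : ∀ i : Fin n, (∑ j : Fin n, ∫ ω, X i ω * X j ω ∂μ)
      = σx2 + ((n : ℝ) - 1) * c + (n : ℝ) * (μx * μx) := by
    intro i
    have h2 : ∀ j : Fin n, ∫ ω, X i ω * X j ω ∂μ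
        = (if i = j then σx2 - c else 0) + c + μx * μx := by
      intro j
      rw [hXX i j]
      split <;> ring
    rw [Finset.sum_congr rfl fun j _ => h2 j]
    rw [Finset.sum_add_distrib, Finset.sum_add_distrib,
      Finset.sum_ite_eq Finset.univ i fun _ => σx2 - c]
    simp [Finset.card_univ]
    ring
  calc ∫ ω, (ensMean X ω - Y ω) ^ 2 ∂μ
      = ∫ ω, ((∑ i, ∑ j, X i ω * X j ω) / (n : ℝ) ^ 2
          - (2 / (n : ℝ)) * ∑ i, X i ω * Y ω + Y ω * Y ω) ∂μ :=
        integral_congr_ae (Filter.Eventually.of_forall hpt)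
    _ = (∑ i, ∑ j : Fin n, ∫ ω, X i ω * X j ω ∂μ) / (n : ℝ) ^ 2
          - (2 / (n : ℝ)) * ∑ i : Fin n, ∫ ω, X i ω * Y ω ∂μ + ∫ ω, Y ω * Y ω ∂μ := by
        rw [integral_add hAB hintYY, integral_sub hA hB, integral_div, integral_const_mul _ _,
          integral_finset_sum _ fun i _ => hintXY i,
          integral_finset_sum _ fun i _ => integrable_finset_sum _ fun j _ => hintXX i j]
        congr 3
        refine Finset.sum_congr rfl fun i _ => ?_
        exact integral_finset_sum _ fun j _ => hintXX i j
    _ = ((n : ℝ) * (σx2 + ((n : ℝ) - 1) * c + (n : ℝ) * (μx * μx))) / (n : ℝ) ^ 2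
          - (2 / (n : ℝ)) * ((n : ℝ) * (γ + μx * μy)) + (σy2 + μy * μy) := by
        rw [hYY, Finset.sum_congr rfl fun i _ => hinner i,
          Finset.sum_congr rfl fun i _ => hXY i, Finset.sum_const, Finset.sum_const,
          Finset.card_univ, Fintype.card_fin, nsmul_eq_mul, nsmul_eq_mul]
    _ = (σx2 - c) / n + σy2 + c - 2 * γ + (μx - μy) ^ 2 := by
        field_simp
        ring
end

section
/- Reliability Budget in expectation: let (X_{1,t}, …, X_{n,t}, Y_t), t = 1, …, T with T ≥ 2, be independent and identically distributed copies of an ensemble-truth system with the stated second-order structure, and set d_t = X̄_t − Y_t. Then E[ ((n+1)/n) (1/T) Σ_t S_{e,t}² − (T/(T−1)) ( (1/T) Σ_t d_t² − ((1/T) Σ_t d_t)² ) ] = Δσ² − 2ΔΣ, where Δσ² = σ_x² − σ_y² and ΔΣ = c − γ; in particular the mean-bias contribution is exactly removed. -/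
open MeasureTheory

open ProbabilityTheory

section RBhelpers

variable {Ω : Type*} [MeasurableSpace Ω] {μ : Measure Ω}

lemma RB.int_mul {f g : Ω → ℝ} (hf : MemLp f 2 μ) (hg : MemLp g 2 μ) :
    Integrable (fun ω => f ω * g ω) μ := by
  have h : MemLp (f • g) 1 μ := hg.smul hf
  rw [memLp_one_iff_integrable] at h
  simpa [Pi.smul_apply, smul_eq_mul, Pi.mul_def] using h

lemma RB.integral_mul_eq [IsProbabilityMeasure μ] {f g : Ω → ℝ}
    (hf : MemLp f 2 μ) (hg : MemLp g 2 μ) :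
    ∫ ω, f ω * g ω ∂μ = cov μ f g + (∫ ω, f ω ∂μ) * (∫ ω, g ω ∂μ) := by
  have hfi := hf.integrable one_le_two
  have hgi := hg.integrable one_le_two
  have hfg := RB.int_mul hf hg
  set a := ∫ ω, f ω ∂μ with ha
  set b := ∫ ω, g ω ∂μ with hb
  have key : ∀ ω, (f ω - a) * (g ω - b) = f ω * g ω - (a * g ω + b * f ω) + a * b := by
    intro ω; ring
  rw [cov, ← ha, ← hb]
  simp_rw [key]
  have h2 : Integrable (fun ω => a * g ω + b * f ω) μ :=
    (hgi.const_mul a).add (hfi.const_mul b)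
  have h1 : Integrable (fun ω => f ω * g ω - (a * g ω + b * f ω)) μ := hfg.sub h2
  rw [integral_add h1 (integrable_const _),
    integral_sub hfg h2,
    integral_add (hgi.const_mul a) (hfi.const_mul b),
    integral_const_mul, integral_const_mul, integral_const]
  simp only [measure_univ, probReal_univ, ENNReal.toReal_one, smul_eq_mul, one_mul, ← ha, ← hb]
  ring

lemma RB.memLp_div_const {f : Ω → ℝ} (hf : MemLp f 2 μ) (c : ℝ) :
    MemLp (fun ω => f ω / c) 2 μ := by
  simpa [div_eq_mul_inv, mul_comm] using hf.const_mul c⁻¹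

end RBhelpers

/-- Reliability Budget in expectation: for i.i.d. copies `(X_{1,t}, …, X_{n,t}, Y_t)`,
`t = 1, …, T` (`T ≥ 2`), of an ensemble-truth system, with `d_t = X̄_t − Y_t`,
`E[((n+1)/n) (1/T) Σ_t S_{e,t}² − (T/(T−1)) ((1/T) Σ_t d_t² − ((1/T) Σ_t d_t)²)]
  = Δσ² − 2ΔΣ`; in particular the mean-bias contribution is exactly removed. -/
theorem reliability_budget_expectation
    {Ω : Type*} [MeasurableSpace Ω] (μ : Measure Ω) [IsProbabilityMeasure μ]
    (n T : ℕ) (hn : 2 ≤ n) (hT : 2 ≤ T)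
    (X : Fin T → Fin n → Ω → ℝ) (Y : Fin T → Ω → ℝ)
    (hL2 : ∀ t i, MemLp (X t i) 2 μ) (hYL2 : ∀ t, MemLp (Y t) 2 μ)
    (μx σx2 c μy σy2 γ : ℝ) (hσx2 : 0 < σx2) (hσy2 : 0 < σy2)
    (hindep : iIndepFun
      (fun t ω => ((fun i => X t i ω, Y t ω) : (Fin n → ℝ) × ℝ)) μ)
    (hident : ∀ s t : Fin T, IdentDistrib
      (fun ω => ((fun i => X s i ω, Y s ω) : (Fin n → ℝ) × ℝ))
      (fun ω => ((fun i => X t i ω, Y t ω) : (Fin n → ℝ) × ℝ)) μ μ)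
    (hmean : ∀ t i, ∫ ω, X t i ω ∂μ = μx)
    (hvar : ∀ t i, cov μ (X t i) (X t i) = σx2)
    (hcov : ∀ t, ∀ i j, i ≠ j → cov μ (X t i) (X t j) = c)
    (hmeanY : ∀ t, ∫ ω, Y t ω ∂μ = μy)
    (hvarY : ∀ t, cov μ (Y t) (Y t) = σy2)
    (hcovXY : ∀ t i, cov μ (X t i) (Y t) = γ) :
    ∫ ω, (((n : ℝ) + 1) / n) * ((∑ t, ensVar (X t) ω) / T) -
        ((T : ℝ) / ((T : ℝ) - 1)) *
          ((∑ t, (ensMean (X t) ω - Y t ω) ^ 2) / T -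
            ((∑ t, (ensMean (X t) ω - Y t ω)) / T) ^ 2) ∂μ =
      (σx2 - σy2) - 2 * (c - γ) := by
  clear hident hσx2 hσy2
  have hn2 : (2:ℝ) ≤ (n:ℝ) := by exact_mod_cast hn
  have hT2 : (2:ℝ) ≤ (T:ℝ) := by exact_mod_cast hT
  have hn0 : (n:ℝ) ≠ 0 := by linarith
  have hn1 : (n:ℝ) - 1 ≠ 0 := by intro h; linarith
  have hT0 : (T:ℝ) ≠ 0 := by linarith
  have hT1 : (T:ℝ) - 1 ≠ 0 := by intro h; linarith
  -- product integrals
  have hXXint : ∀ t i j, Integrable (fun ω => X t i ω * X t j ω) μ :=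
    fun t i j => RB.int_mul (hL2 t i) (hL2 t j)
  have hXYint : ∀ t i, Integrable (fun ω => X t i ω * Y t ω) μ :=
    fun t i => RB.int_mul (hL2 t i) (hYL2 t)
  have hXX : ∀ t i j, ∫ ω, X t i ω * X t j ω ∂μ = (if i = j then σx2 else c) + μx * μx := by
    intro t i j
    rw [RB.integral_mul_eq (hL2 t i) (hL2 t j), hmean, hmean]
    by_cases h : i = j
    · subst h; rw [hvar]; simp
    · rw [hcov t i j h]; simp [h]
  have hXY : ∀ t i, ∫ ω, X t i ω * Y t ω ∂μ = γ + μx * μy := by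
    intro t i
    rw [RB.integral_mul_eq (hL2 t i) (hYL2 t), hmean, hmeanY, hcovXY]
  have hYY : ∀ t, ∫ ω, (Y t ω) ^ 2 ∂μ = σy2 + μy * μy := by
    intro t
    simp_rw [sq]
    rw [RB.integral_mul_eq (hYL2 t) (hYL2 t), hmeanY, hvarY]
  -- sums
  have hSL2 : ∀ t, MemLp (fun ω => ∑ i, X t i ω) 2 μ :=
    fun t => memLp_finset_sum _ (fun i _ => hL2 t i)
  have hrow : ∀ (t : Fin T) (i : Fin n),
      ∫ ω, (∑ j, X t i ω * X t j ω) ∂μ = σx2 + ((n:ℝ) - 1) * c + (n:ℝ) * (μx * μx) := by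
    intro t i
    rw [integral_finset_sum _ (fun j _ => hXXint t i j)]
    have : ∀ j : Fin n, ∫ ω, X t i ω * X t j ω ∂μ
        = (if i = j then σx2 - c else 0) + (c + μx * μx) := by
      intro j
      rw [hXX t i j]
      by_cases h : i = j <;> simp [h] <;> ring
    simp_rw [this]
    rw [Finset.sum_add_distrib, Finset.sum_ite_eq, Finset.sum_const]
    simp only [Finset.mem_univ, if_true, Finset.card_univ, Fintype.card_fin, nsmul_eq_mul]
    ring
  have hS2 : ∀ t, ∫ ω, (∑ i, X t i ω) ^ 2 ∂μ
      = (n:ℝ) * σx2 + (n:ℝ) * ((n:ℝ) - 1) * c + (n:ℝ)^2 * (μx * μx) := by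
    intro t
    have e : ∀ ω, (∑ i, X t i ω) ^ 2 = ∑ i, ∑ j, X t i ω * X t j ω := by
      intro ω; rw [sq, Finset.sum_mul_sum]
    simp_rw [e]
    rw [integral_finset_sum _ (fun i _ => integrable_finset_sum _ (fun j _ => hXXint t i j))]
    simp_rw [hrow]
    rw [Finset.sum_const]
    simp only [Finset.card_univ, Fintype.card_fin, nsmul_eq_mul]
    ring
  have hSY : ∀ t, ∫ ω, (∑ i, X t i ω) * Y t ω ∂μ = (n:ℝ) * (γ + μx * μy) := by
    intro t
    have e : ∀ ω, (∑ i, X t i ω) * Y t ω = ∑ i, X t i ω * Y t ω := by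
      intro ω; rw [Finset.sum_mul]
    simp_rw [e]
    rw [integral_finset_sum _ (fun i _ => hXYint t i)]
    simp_rw [hXY]
    rw [Finset.sum_const]
    simp only [Finset.card_univ, Fintype.card_fin, nsmul_eq_mul]
  -- d is L2
  have hdL2 : ∀ t, MemLp (fun ω => ensMean (X t) ω - Y t ω) 2 μ := by
    intro t
    have h1 : MemLp (fun ω => (∑ i, X t i ω) / (n:ℝ)) 2 μ := RB.memLp_div_const (hSL2 t) _
    exact h1.sub (hYL2 t)
  -- ensemble variance expectation
  have hEVint : ∀ t, Integrable (fun ω => ensVar (X t) ω) μ := by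
    intro t
    unfold ensVar
    exact (integrable_finset_sum _
      (fun i _ => ((hL2 t i).sub (RB.memLp_div_const (hSL2 t) _)).integrable_sq)).div_const _
  have hEV : ∀ t, ∫ ω, ensVar (X t) ω ∂μ = σx2 - c := by
    intro t
    have key : ∀ ω, ensVar (X t) ω
        = ((∑ i, (X t i ω)^2) - (∑ i, X t i ω)^2 / n) / ((n:ℝ) - 1) := by
      intro ω
      unfold ensVar ensMean
      congr 1
      have expand : ∀ i : Fin n, (X t i ω - (∑ j, X t j ω)/(n:ℝ))^2
          = (X t i ω)^2 - (2*((∑ j, X t j ω)/(n:ℝ))) * X t i ω + ((∑ j, X t j ω)/(n:ℝ))^2 := by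
        intro i; ring
      simp_rw [expand, Finset.sum_add_distrib, Finset.sum_sub_distrib, ← Finset.mul_sum,
        Finset.sum_const, Finset.card_univ, Fintype.card_fin, nsmul_eq_mul]
      field_simp
      ring
    simp_rw [key]
    have i1 : Integrable (fun ω => ∑ i, (X t i ω)^2) μ :=
      integrable_finset_sum _ (fun i _ => (hL2 t i).integrable_sq)
    have i2 : Integrable (fun ω => (∑ i, X t i ω)^2 / (n:ℝ)) μ :=
      ((hSL2 t).integrable_sq).div_const _
    have i3 : Integrable (fun ω => (∑ i, (X t i ω)^2) - (∑ i, X t i ω)^2 / (n:ℝ)) μ := i1.sub i2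
    rw [integral_div, integral_sub i1 i2, integral_finset_sum _ (fun i _ => (hL2 t i).integrable_sq),
      integral_div, hS2]
    have e : ∀ i : Fin n, ∫ ω, (X t i ω)^2 ∂μ = σx2 + μx * μx := by
      intro i
      simp_rw [sq]
      rw [hXX t i i]
      simp
    simp_rw [e]
    rw [Finset.sum_const]
    simp only [Finset.card_univ, Fintype.card_fin, nsmul_eq_mul]
    field_simp
    ring
  -- mean of d
  have hd : ∀ t, ∫ ω, (ensMean (X t) ω - Y t ω) ∂μ = μx - μy := by
    intro t
    unfold ensMean
    have i1 : Integrable (fun ω => (∑ i, X t i ω) / (n:ℝ)) μ :=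
      (integrable_finset_sum _ (fun i _ => (hL2 t i).integrable one_le_two)).div_const _
    rw [integral_sub i1 ((hYL2 t).integrable one_le_two), integral_div,
      integral_finset_sum _ (fun i _ => (hL2 t i).integrable one_le_two), hmeanY]
    simp_rw [hmean]
    rw [Finset.sum_const]
    simp only [Finset.card_univ, Fintype.card_fin, nsmul_eq_mul]
    field_simp
  -- second moment of d
  have hd2 : ∀ t, ∫ ω, (ensMean (X t) ω - Y t ω)^2 ∂μ
      = (σx2/(n:ℝ) + (((n:ℝ)-1)/(n:ℝ)) * c + σy2 - 2*γ) + (μx - μy)^2 := by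
    intro t
    unfold ensMean
    have key : ∀ ω, ((∑ i, X t i ω)/(n:ℝ) - Y t ω)^2
        = (∑ i, X t i ω)^2/(n:ℝ)^2 - (2/(n:ℝ))*((∑ i, X t i ω) * Y t ω) + (Y t ω)^2 := by
      intro ω; field_simp; ring
    simp_rw [key]
    have i1 : Integrable (fun ω => (∑ i, X t i ω)^2/(n:ℝ)^2) μ :=
      ((hSL2 t).integrable_sq).div_const _
    have i2 : Integrable (fun ω => (2/(n:ℝ))*((∑ i, X t i ω) * Y t ω)) μ :=
      (RB.int_mul (hSL2 t) (hYL2 t)).const_mul _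
    have i12 : Integrable (fun ω => (∑ i, X t i ω)^2/(n:ℝ)^2
        - (2/(n:ℝ))*((∑ i, X t i ω) * Y t ω)) μ := i1.sub i2
    rw [integral_add i12 ((hYL2 t).integrable_sq), integral_sub i1 i2, integral_div,
      integral_const_mul, hS2, hSY, hYY]
    field_simp
    ring
  -- independence of the d's
  have hdind : ∀ s t : Fin T, s ≠ t →
      ∫ ω, (ensMean (X s) ω - Y s ω) * (ensMean (X t) ω - Y t ω) ∂μ
        = (μx - μy) * (μx - μy) := by
    intro s t hst
    have hg : Measurable (fun p : (Fin n → ℝ) × ℝ => (∑ i, p.1 i)/(n:ℝ) - p.2) := by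
      apply Measurable.sub
      · exact (Finset.measurable_sum _
          (fun i _ => (measurable_pi_apply i).comp measurable_fst)).div_const _
      · exact measurable_snd
    have hcomp := hindep.comp (fun _ => (fun p : (Fin n → ℝ) × ℝ => (∑ i, p.1 i)/(n:ℝ) - p.2))
      (fun _ => hg)
    have hind : IndepFun (fun ω => ensMean (X s) ω - Y s ω)
        (fun ω => ensMean (X t) ω - Y t ω) μ := hcomp.indepFun hst
    have := hind.integral_fun_mul_eq_mul_integral ((hdL2 s).integrable one_le_two).aestronglyMeasurable
      ((hdL2 t).integrable one_le_two).aestronglyMeasurable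
    rw [hd, hd] at this
    exact this
  -- assemble
  have hddiag : ∀ s t : Fin T,
      ∫ ω, (ensMean (X s) ω - Y s ω) * (ensMean (X t) ω - Y t ω) ∂μ
        = (if s = t then (σx2/(n:ℝ) + (((n:ℝ)-1)/(n:ℝ)) * c + σy2 - 2*γ) else 0)
          + (μx - μy)^2 := by
    intro s t
    by_cases h : s = t
    · subst h
      simp only [if_true]
      have : ∀ ω, (ensMean (X s) ω - Y s ω) * (ensMean (X s) ω - Y s ω)
          = (ensMean (X s) ω - Y s ω)^2 := fun ω => (sq _).symm
      simp_rw [this]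
      rw [hd2]
    · simp only [h, if_false, zero_add]
      rw [hdind s t h]
      ring
  -- rewrite the integrand
  have key : ∀ ω, (((n : ℝ) + 1) / n) * ((∑ t, ensVar (X t) ω) / T) -
        ((T : ℝ) / ((T : ℝ) - 1)) *
          ((∑ t, (ensMean (X t) ω - Y t ω) ^ 2) / T -
            ((∑ t, (ensMean (X t) ω - Y t ω)) / T) ^ 2)
      = ((((n:ℝ)+1)/((n:ℝ)*(T:ℝ))) * (∑ t, ensVar (X t) ω)
          - (1/((T:ℝ)-1)) * (∑ t, (ensMean (X t) ω - Y t ω)^2))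
        + (1/((T:ℝ)*((T:ℝ)-1)))
          * (∑ s, ∑ t, (ensMean (X s) ω - Y s ω) * (ensMean (X t) ω - Y t ω)) := by
    intro ω
    rw [div_pow, sq (∑ t, (ensMean (X t) ω - Y t ω)), Finset.sum_mul_sum]
    field_simp
    ring
  rw [integral_congr_ae (Filter.Eventually.of_forall key)]
  have int1 : Integrable (fun ω => ∑ t, ensVar (X t) ω) μ :=
    integrable_finset_sum _ (fun t _ => hEVint t)
  have int2 : Integrable (fun ω => ∑ t, (ensMean (X t) ω - Y t ω)^2) μ :=
    integrable_finset_sum _ (fun t _ => (hdL2 t).integrable_sq)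
  have int3 : Integrable (fun ω => ∑ s, ∑ t,
      (ensMean (X s) ω - Y s ω) * (ensMean (X t) ω - Y t ω)) μ :=
    integrable_finset_sum _ (fun s _ => integrable_finset_sum _
      (fun t _ => RB.int_mul (hdL2 s) (hdL2 t)))
  have j1 : Integrable (fun ω => ((((n:ℝ)+1)/((n:ℝ)*(T:ℝ))) * (∑ t, ensVar (X t) ω)
      - (1/((T:ℝ)-1)) * (∑ t, (ensMean (X t) ω - Y t ω)^2))) μ :=
    (int1.const_mul _).sub (int2.const_mul _)
  rw [integral_add j1 (int3.const_mul _),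
    integral_sub (int1.const_mul _) (int2.const_mul _),
    integral_const_mul, integral_const_mul, integral_const_mul,
    integral_finset_sum _ (fun t _ => hEVint t),
    integral_finset_sum _ (fun t _ => (hdL2 t).integrable_sq),
    integral_finset_sum _ (fun s _ => integrable_finset_sum _
      (fun t _ => RB.int_mul (hdL2 s) (hdL2 t)))]
  simp_rw [hEV, hd2]
  have hC : ∀ s : Fin T, (∫ ω, ∑ t, (ensMean (X s) ω - Y s ω) * (ensMean (X t) ω - Y t ω) ∂μ)
      = (σx2/(n:ℝ) + (((n:ℝ)-1)/(n:ℝ)) * c + σy2 - 2*γ) + (T:ℝ) * (μx - μy)^2 := by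
    intro s
    rw [integral_finset_sum _ (fun t _ => RB.int_mul (hdL2 s) (hdL2 t))]
    have : ∀ t, (∫ ω, (ensMean (X s) ω - Y s ω) * (ensMean (X t) ω - Y t ω) ∂μ)
        = (if s = t then (σx2/(n:ℝ) + (((n:ℝ)-1)/(n:ℝ)) * c + σy2 - 2*γ) else 0)
          + (μx - μy)^2 := fun t => hddiag s t
    simp_rw [this]
    rw [Finset.sum_add_distrib, Finset.sum_ite_eq, Finset.sum_const]
    simp only [Finset.mem_univ, if_true, Finset.card_univ, Fintype.card_fin, nsmul_eq_mul]
  simp_rw [hC]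
  rw [Finset.sum_const, Finset.sum_const, Finset.sum_const]
  simp only [Finset.card_univ, Fintype.card_fin, nsmul_eq_mul]
  field_simp
  ring
end

section
/- Insufficiency of the Spread-Error relationship: for every integer n ≥ 2 and every real d ≠ 0, there exist a probability space and square-integrable real random variables Y, X_1, …, X_n having the stated second-order structure with Δμ = 0, Δσ² = d, and ΔΣ = d/2, such that E[δ_τ] = 0 while the ensemble is not second-order exchangeable with the truth (since Δσ² ≠ 0). -/
open MeasureTheory

lemma spread_error_aux1 (N w d u v : ℝ) (hw : w ≠ 0) (hN : N + 1 ≠ 0)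
    (hu : u = d/(2*w) + w/(N+1)) (hv : v = u - w) :
    w^2*(N-1)/(N+1) + u^2 - v^2 = d := by
  subst hv; subst hu; field_simp; ring

lemma spread_error_aux2 (N w d u v : ℝ) (hw : w ≠ 0) (hN : N + 1 ≠ 0)
    (hu : u = d/(2*w) + w/(N+1)) (hv : v = u - w) :
    -w^2/(N+1) + u^2 - u*v = d/2 := by
  subst hv; subst hu; field_simp; ring

/-- Insufficiency of the Spread-Error relationship: for every `n ≥ 2` and every `d ≠ 0`, there
exists an ensemble-truth system with `Δμ = 0`, `Δσ² = d`, `ΔΣ = d/2`, whose expected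
Spread-Error difference vanishes although `σ_x² ≠ σ_y²`. -/
theorem spread_error_insufficient (n : ℕ) (hn : 2 ≤ n) (d : ℝ) (hd : d ≠ 0) :
    ∃ (Ω : Type) (_ : MeasurableSpace Ω) (μ : Measure Ω) (_ : IsProbabilityMeasure μ)
      (X : Fin n → Ω → ℝ) (Y : Ω → ℝ) (μx σx2 c μy σy2 γ : ℝ),
      (∀ i, MemLp (X i) 2 μ) ∧ MemLp Y 2 μ ∧
      0 < σx2 ∧ 0 < σy2 ∧
      (∀ i, ∫ ω, X i ω ∂μ = μx) ∧
      (∀ i, cov μ (X i) (X i) = σx2) ∧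
      (∀ i j, i ≠ j → cov μ (X i) (X j) = c) ∧
      (∫ ω, Y ω ∂μ = μy) ∧
      cov μ Y Y = σy2 ∧
      (∀ i, cov μ (X i) Y = γ) ∧
      μx - μy = 0 ∧
      σx2 - σy2 = d ∧
      c - γ = d / 2 ∧
      (∫ ω, spreadError X Y ω ∂μ) = 0 ∧
      σx2 ≠ σy2 := by
  classical
  haveI : NeZero n := ⟨by omega⟩
  have hn2r : (2:ℝ) ≤ (n:ℝ) := by exact_mod_cast hn
  have hn0 : (n:ℝ) ≠ 0 := by positivity
  have hn1pos : (0:ℝ) < (n:ℝ) + 1 := by linarith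
  have hn1 : (n:ℝ) + 1 ≠ 0 := ne_of_gt hn1pos
  set w : ℝ := 1 + |d| with hw_def
  have hw1 : 1 ≤ w := by
    rw [hw_def]; linarith [abs_nonneg d]
  have hw0 : 0 < w := by linarith
  have hwne : w ≠ 0 := ne_of_gt hw0
  have hd1 : d ≤ w - 1 := by
    rw [hw_def]; linarith [le_abs_self d]
  set u : ℝ := d / (2*w) + w / ((n:ℝ)+1) with hu_def
  set v : ℝ := u - w with hv_def
  set t : ℝ := (n:ℝ) * w / Real.sqrt ((n:ℝ)+1) with ht_def
  have ht2 : t^2 = (n:ℝ)^2 * w^2 / ((n:ℝ)+1) := by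
    rw [ht_def, div_pow, Real.sq_sqrt (le_of_lt hn1pos), mul_pow]
  -- v is negative
  have hveq : v = (d*((n:ℝ)+1) + 2*w^2 - 2*w^2*((n:ℝ)+1)) / (2*w*((n:ℝ)+1)) := by
    rw [hv_def, hu_def]; field_simp
  have hkey : d*((n:ℝ)+1) + 2*w^2 - 2*w^2*((n:ℝ)+1) < 0 := by
    nlinarith [mul_le_mul_of_nonneg_right hd1 (le_of_lt hn1pos), sq_nonneg (w-1),
      mul_pos hw0 hw0]
  have hvneg : v < 0 := by
    rw [hveq]; exact div_neg_of_neg_of_pos hkey (by positivity)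
  have hvne : v ≠ 0 := ne_of_lt hvneg
  -- the space and the random variables
  set μ : Measure (Fin n × Bool) := (PMF.uniformOfFintype (Fin n × Bool)).toMeasure with hμ
  set X : Fin n → (Fin n × Bool) → ℝ :=
    fun i ω => t * ((if i = ω.1 then (1:ℝ) else 0) - 1/(n:ℝ))
      + u * (if ω.2 then (1:ℝ) else -1) with hX
  set Yf : (Fin n × Bool) → ℝ := fun ω => v * (if ω.2 then (1:ℝ) else -1) with hYf
  -- integral over the uniform measure
  have hint : ∀ f : Fin n × Bool → ℝ,
      ∫ a, f a ∂μ = (2*(n:ℝ))⁻¹ * ∑ j : Fin n, (f (j, true) + f (j, false)) := by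
    intro f
    rw [hμ, PMF.integral_eq_sum]
    simp only [PMF.uniformOfFintype_apply, ENNReal.toReal_inv, smul_eq_mul,
      Fintype.card_prod, Fintype.card_fin, Fintype.card_bool]
    rw [Fintype.sum_prod_type, Finset.mul_sum]
    refine Finset.sum_congr rfl fun j _ => ?_
    rw [Fintype.sum_bool]
    have h2 : ((↑(n * 2) : ENNReal)).toReal = 2 * (n:ℝ) := by simp; ring
    rw [h2]; ring
  -- the basic indicator sums
  have hS0 : ∀ i : Fin n, ∑ j : Fin n, ((if i = j then (1:ℝ) else 0) - 1/(n:ℝ)) = 0 := by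
    intro i
    rw [Finset.sum_sub_distrib]
    simp [Finset.sum_ite_eq, hn0]
  have hS0' : ∀ j : Fin n, ∑ i : Fin n, ((if i = j then (1:ℝ) else 0) - 1/(n:ℝ)) = 0 := by
    intro j
    rw [Finset.sum_sub_distrib]
    simp [Finset.sum_ite_eq', hn0]
  have hS1 : ∀ i : Fin n, ∑ j : Fin n, ((if i = j then (1:ℝ) else 0) - 1/(n:ℝ))^2
      = ((n:ℝ)-1)/(n:ℝ) := by
    intro i
    have key : ∀ j : Fin n, ((if i = j then (1:ℝ) else 0) - 1/(n:ℝ))^2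
        = (if i = j then (1:ℝ) else 0) * (1 - 2/(n:ℝ)) + 1/(n:ℝ)^2 := by
      intro j; split_ifs <;> field_simp <;> ring
    simp only [key]
    rw [Finset.sum_add_distrib, Finset.sum_const]
    simp [Finset.sum_ite_eq, hn0]
    field_simp
    ring
  have hS1' : ∀ j : Fin n, ∑ i : Fin n, ((if i = j then (1:ℝ) else 0) - 1/(n:ℝ))^2
      = ((n:ℝ)-1)/(n:ℝ) := by
    intro j
    have key : ∀ i : Fin n, ((if i = j then (1:ℝ) else 0) - 1/(n:ℝ))^2
        = (if i = j then (1:ℝ) else 0) * (1 - 2/(n:ℝ)) + 1/(n:ℝ)^2 := by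
      intro i; split_ifs <;> field_simp <;> ring
    simp only [key]
    rw [Finset.sum_add_distrib, Finset.sum_const]
    simp [Finset.sum_ite_eq', hn0]
    field_simp
    ring
  have hS2 : ∀ i k : Fin n, i ≠ k →
      ∑ j : Fin n, (((if i = j then (1:ℝ) else 0) - 1/(n:ℝ))
        * ((if k = j then (1:ℝ) else 0) - 1/(n:ℝ))) = -(1/(n:ℝ)) := by
    intro i k hik
    have key : ∀ j : Fin n, (((if i = j then (1:ℝ) else 0) - 1/(n:ℝ))
        * ((if k = j then (1:ℝ) else 0) - 1/(n:ℝ)))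
        = 1/(n:ℝ)^2 - ((if i = j then (1:ℝ) else 0) + (if k = j then (1:ℝ) else 0))/(n:ℝ) := by
      intro j
      by_cases h1 : i = j <;> by_cases h2 : k = j
      · exact absurd (h1.trans h2.symm) hik
      all_goals simp [h1, h2]
      all_goals field_simp
      all_goals ring
    simp only [key]
    rw [Finset.sum_sub_distrib, Finset.sum_const, ← Finset.sum_div, Finset.sum_add_distrib]
    simp [Finset.sum_ite_eq, hn0]
    field_simp
    ring
  -- means are zero
  have hEX : ∀ i, ∫ ω, X i ω ∂μ = 0 := by
    intro i
    rw [hint]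
    have h1 : ∀ j : Fin n, (X i (j, true) + X i (j, false))
        = 2*t*((if i = j then (1:ℝ) else 0) - 1/(n:ℝ)) := by
      intro j; simp only [hX]; simp; ring
    rw [Finset.sum_congr rfl (fun j _ => h1 j), ← Finset.mul_sum, hS0 i, mul_zero, mul_zero]
  have hEY : ∫ ω, Yf ω ∂μ = 0 := by
    rw [hint]
    have h1 : ∀ j : Fin n, (Yf (j, true) + Yf (j, false)) = 0 := by
      intro j; simp only [hYf]; simp
    rw [Finset.sum_congr rfl (fun j _ => h1 j), Finset.sum_const, smul_zero, mul_zero]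
  -- spreadError vanishes pointwise
  have hmean : ∀ ω : Fin n × Bool, ensMean X ω = u * (if ω.2 then (1:ℝ) else -1) := by
    intro ω
    rw [ensMean]
    have : ∑ i, X i ω = t * (∑ i : Fin n, ((if i = ω.1 then (1:ℝ) else 0) - 1/(n:ℝ)))
        + (n:ℝ) * (u * (if ω.2 then (1:ℝ) else -1)) := by
      simp only [hX]
      rw [Finset.sum_add_distrib, ← Finset.mul_sum, Finset.sum_const]
      simp
    rw [this, hS0' ω.1, mul_zero, zero_add, mul_div_cancel_left₀ _ hn0]
  have hvar : ∀ ω : Fin n × Bool, ensVar X ω = t^2/(n:ℝ) := by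
    intro ω
    rw [ensVar]
    have h1 : ∀ i : Fin n, (X i ω - ensMean X ω)^2
        = t^2 * ((if i = ω.1 then (1:ℝ) else 0) - 1/(n:ℝ))^2 := by
      intro i
      rw [hmean]
      simp only [hX]
      ring
    rw [Finset.sum_congr rfl (fun i _ => h1 i), ← Finset.mul_sum, hS1' ω.1]
    have hnm1 : ((n:ℝ)-1) ≠ 0 := by linarith
    rw [mul_div_assoc, div_div, mul_comm ((n:ℝ)) (((n:ℝ)-1)), ← div_div,
      div_self hnm1, one_div] 
    rw [div_eq_mul_inv]
  have hsp : ∀ ω : Fin n × Bool, spreadError X Yf ω = 0 := by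
    intro ω
    rw [spreadError, hvar, hmean]
    have h1 : (u * (if ω.2 then (1:ℝ) else -1) - Yf ω)^2 = w^2 := by
      simp only [hYf, hv_def]
      cases ω.2 <;> simp <;> ring
    rw [h1, ht2]
    field_simp
    ring
  refine ⟨Fin n × Bool, inferInstance, μ, inferInstance, X, Yf,
    0, w^2*((n:ℝ)-1)/((n:ℝ)+1) + u^2, -w^2/((n:ℝ)+1) + u^2, 0, v^2, u*v,
    fun i => MemLp.of_discrete, MemLp.of_discrete, ?_, ?_, hEX, ?_, ?_, hEY, ?_, ?_,
    by ring, ?_, ?_, ?_, ?_⟩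
  · -- 0 < σx2
    have h1 : 0 < w^2*((n:ℝ)-1)/((n:ℝ)+1) :=
      div_pos (mul_pos (pow_pos hw0 2) (by linarith)) hn1pos
    exact add_pos_of_pos_of_nonneg h1 (sq_nonneg u)
  · -- 0 < v^2
    positivity
  · -- variance of X i
    intro i
    simp only [cov, hEX i, sub_zero]
    rw [hint]
    have h1 : ∀ j : Fin n, (X i (j, true) * X i (j, true) + X i (j, false) * X i (j, false))
        = 2*t^2*((if i = j then (1:ℝ) else 0) - 1/(n:ℝ))^2 + 2*u^2 := by
      intro j; simp only [hX]; simp; ring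
    rw [Finset.sum_congr rfl (fun j _ => h1 j), Finset.sum_add_distrib, ← Finset.mul_sum,
      hS1 i, Finset.sum_const, Finset.card_univ, Fintype.card_fin, nsmul_eq_mul, ht2]
    field_simp
  · -- covariance of X i, X k
    intro i k hik
    simp only [cov, hEX i, hEX k, sub_zero]
    rw [hint]
    have h1 : ∀ j : Fin n, (X i (j, true) * X k (j, true) + X i (j, false) * X k (j, false))
        = 2*t^2*(((if i = j then (1:ℝ) else 0) - 1/(n:ℝ))
          * ((if k = j then (1:ℝ) else 0) - 1/(n:ℝ))) + 2*u^2 := by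
      intro j; simp only [hX]; simp; ring
    rw [Finset.sum_congr rfl (fun j _ => h1 j), Finset.sum_add_distrib, ← Finset.mul_sum,
      hS2 i k hik, Finset.sum_const, Finset.card_univ, Fintype.card_fin, nsmul_eq_mul, ht2]
    field_simp
  · -- variance of Y
    simp only [cov, hEY, sub_zero]
    rw [hint]
    have h1 : ∀ j : Fin n, (Yf (j, true) * Yf (j, true) + Yf (j, false) * Yf (j, false))
        = 2*v^2 := by
      intro j; simp only [hYf]; simp; ring
    rw [Finset.sum_congr rfl (fun j _ => h1 j), Finset.sum_const, Finset.card_univ,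
      Fintype.card_fin, nsmul_eq_mul]
    field_simp
  · -- covariance of X i with Y
    intro i
    simp only [cov, hEX i, hEY, sub_zero]
    rw [hint]
    have h1 : ∀ j : Fin n, (X i (j, true) * Yf (j, true) + X i (j, false) * Yf (j, false))
        = 2*(u*v) := by
      intro j; simp only [hX, hYf]; simp; ring
    rw [Finset.sum_congr rfl (fun j _ => h1 j), Finset.sum_const, Finset.card_univ,
      Fintype.card_fin, nsmul_eq_mul]
    field_simp
  · -- σx2 - σy2 = d
    exact spread_error_aux1 (n:ℝ) w d u v hwne hn1 hu_def hv_def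
  · -- c - γ = d/2
    exact spread_error_aux2 (n:ℝ) w d u v hwne hn1 hu_def hv_def
  · -- expected spread error is zero
    simp only [hsp, integral_zero]
  · -- σx2 ≠ σy2
    intro hEq
    apply hd
    have : w^2*((n:ℝ)-1)/((n:ℝ)+1) + u^2 - v^2 = d :=
      spread_error_aux1 (n:ℝ) w d u v hwne hn1 hu_def hv_def
    rw [hEq, sub_self] at this
    exact this.symm
end
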